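/- arXiv:1208.2766 — 9 statements merged into one kernel-verified Lean document; each statement's English description precedes it below -/
import Mathlib

section
/- A map τ : A^{Σ*} → A^{Σ*} is a cellular automaton (i.e., there exist r ≥ 1 and μ : A^{Δ_{r+1}} → A with τ(f)(v) = μ((f^v)|_{Δ_{r+1}}) for all f, v) if and only if τ is continuous with respect to the prodiscrete topology and commutes with the shift action, i.e., (τ(f))^v = τ(f^v) for all f ∈ A^{Σ*} and v ∈ Σ*. -/
open Function

variable {Sig A : Type*}

/-- Configurations over the tree `Sig*`: maps from the free monoid (lists) to `A`. -/
abbrev Config (Sig A : Type*) := List Sig → A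

/-- Shift action: `(shift f v) w = f (v ++ w)`. -/
def shift (f : Config Sig A) (v : List Sig) : Config Sig A := fun w => f (v ++ w)

/-- `Delta Sig n` is the set of words of length `< n` (i.e. `Δ_n`). -/
def Delta (Sig : Type*) (n : ℕ) : Type _ := {w : List Sig // w.length < n}

/-- Restriction of a configuration to `Δ_n`. -/
def restrict (f : Config Sig A) (n : ℕ) : Delta Sig n → A := fun w => f w.val

/-- The CA defined by a local map `μ` of radius `r`. -/
def caMap (r : ℕ) (μ : (Delta Sig (r + 1) → A) → A) : Config Sig A → Config Sig A :=
  fun f v => μ (restrict (shift f v) (r + 1))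

/-- `τ` is a cellular automaton: it admits a radius `r ≥ 1` and a local defining map. -/
def IsCA (τ : Config Sig A → Config Sig A) : Prop :=
  ∃ r : ℕ, 1 ≤ r ∧ ∃ μ : (Delta Sig (r + 1) → A) → A,
    ∀ (f : Config Sig A) (v : List Sig), τ f v = μ (restrict (shift f v) (r + 1))

/-- A subshift: a closed, shift-invariant set of configurations. -/
def IsSubshift [TopologicalSpace A] (X : Set (Config Sig A)) : Prop :=
  IsClosed X ∧ ∀ f ∈ X, ∀ v : List Sig, shift f v ∈ X

/-- The blocks of size `n` of `X`. -/
def blockSet (X : Set (Config Sig A)) (n : ℕ) : Set (Delta Sig n → A) :=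
  {p | ∃ f ∈ X, restrict f n = p}

/-- Positive expansiveness with constant `N`. -/
def PosExpansive (τ : Config Sig A → Config Sig A) (N : ℕ) : Prop :=
  1 ≤ N ∧ ∀ f₁ f₂ : Config Sig A, f₁ ≠ f₂ →
    ∃ t : ℕ, restrict (τ^[t] f₁) N ≠ restrict (τ^[t] f₂) N

/-- The set `P(τ, n, t)` of `t`-tuples of traces on `Δ_n`. -/
def Pset (τ : Config Sig A → Config Sig A) (n t : ℕ) : Set (Fin t → Delta Sig n → A) :=
  {s | ∃ f : Config Sig A, ∀ i : Fin t, s i = restrict (τ^[(i : ℕ)] f) n}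

/-- The block `a ◁ p` on `Δ_{r+1}` with root value `a` and agreeing with `p` elsewhere. -/
def rootIns (r : ℕ) (a : A) (p : {w : List Sig // w.length < r + 1 ∧ w ≠ []} → A) :
    Delta Sig (r + 1) → A :=
  fun w => if h : w.val.length = 0 then a else
    p ⟨w.val, ⟨w.2, fun he => h (by simp [he])⟩⟩

/-- Permutivity: for every pattern on `Δ_{r+1} \ {ε}`, the induced map on root values is
a permutation of `A`. -/
def Permutive (r : ℕ) (μ : (Delta Sig (r + 1) → A) → A) : Prop :=
  ∀ p : {w : List Sig // w.length < r + 1 ∧ w ≠ []} → A,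
    Function.Bijective (fun a : A => μ (rootIns r a p))

/-- The image under the local map `μ` of a block of size `n + r`: a block of size `n`. -/
def blockImage (r n : ℕ) (μ : (Delta Sig (r + 1) → A) → A)
    (p : Delta Sig (n + r) → A) : Delta Sig n → A :=
  fun v => μ (fun w => p ⟨v.val ++ w.val, by
    have hv := v.2; have hw := w.2
    simp only [List.length_append]; omega⟩)

/-- A diamond of `(r, μ)`: two distinct blocks of size `n = m + r > 2r + 2` coinciding
with a block `p ∈ A^{Δ_r}` on `Δ_r` and on `vΔ_r` for every `v` of length `m = n - r`,
with the same image under `μ`. -/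
def HasDiamond (r : ℕ) (μ : (Delta Sig (r + 1) → A) → A) : Prop :=
  ∃ (m : ℕ) (_ : r + 2 < m) (p : Delta Sig r → A)
    (p₁ p₂ : Delta Sig (m + r) → A),
    p₁ ≠ p₂ ∧
    (∀ w : Delta Sig r,
      p₁ ⟨w.val, by have := w.2; omega⟩ = p w ∧
      p₂ ⟨w.val, by have := w.2; omega⟩ = p w) ∧
    (∀ v : List Sig, ∀ hv : v.length = m, ∀ w : Delta Sig r,
      p₁ ⟨v ++ w.val, by have := w.2; simp only [List.length_append]; omega⟩ = p w ∧
      p₂ ⟨v ++ w.val, by have := w.2; simp only [List.length_append]; omega⟩ = p w) ∧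
    blockImage r m μ p₁ = blockImage r m μ p₂

/-- Right-closingness of the CA `caMap r μ`. -/
def RightClosing (r : ℕ) (μ : (Delta Sig (r + 1) → A) → A) : Prop :=
  ∃ N : ℕ, ∀ (p : Delta Sig r → A) (q : Delta Sig (r * N) → A),
    (∃ f : Config Sig A, restrict f r = p ∧ restrict (caMap r μ f) (r * N) = q) →
    ∃! ps : {v : List Sig // v.length = r} → Delta Sig r → A,
      ∀ f : Config Sig A, restrict f r = p → restrict (caMap r μ f) (r * N) = q →
        ∀ (v : {v : List Sig // v.length = r}) (w : Delta Sig r),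
          f (v.val ++ w.val) = ps v w



lemma uniform_radius [Finite A] [TopologicalSpace A] [DiscreteTopology A]
    (F : Config Sig A → A) (hF : Continuous F) :
    ∃ n : ℕ, 1 ≤ n ∧ ∀ f g : Config Sig A,
      (∀ w : List Sig, w.length < n → f w = g w) → F f = F g := by
  have key : ∀ f : Config Sig A, ∃ I : Finset (List Sig),
      ∀ g : Config Sig A, (∀ w ∈ I, g w = f w) → F g = F f := by
    intro f
    have ho : IsOpen (F ⁻¹' {F f}) := (isOpen_discrete _).preimage hF
    rw [isOpen_pi_iff] at ho
    obtain ⟨I, u, h1, h2⟩ := ho f rfl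
    refine ⟨I, fun g hg => h2 fun i hi => ?_⟩
    rw [hg i hi]; exact (h1 i hi).2
  choose I hI using key
  have hC : ∀ f : Config Sig A, IsOpen {g : Config Sig A | ∀ w ∈ I f, g w = f w} := by
    intro f
    have : {g : Config Sig A | ∀ w ∈ I f, g w = f w}
        = Set.pi (I f : Set (List Sig)) (fun w => {f w}) := by
      ext g; simp [Set.mem_pi]
    rw [this]
    exact isOpen_set_pi (I f).finite_toSet fun a _ => isOpen_discrete _
  have hcov : (Set.univ : Set (Config Sig A)) ⊆
      ⋃ f : Config Sig A, {g : Config Sig A | ∀ w ∈ I f, g w = f w} := by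
    intro f _
    exact Set.mem_iUnion.2 ⟨f, fun w _ => rfl⟩
  obtain ⟨t, ht⟩ := isCompact_univ.elim_finite_subcover _ hC hcov
  refine ⟨(t.sup fun f => (I f).sup List.length) + 1, le_add_self, ?_⟩
  intro f g hfg
  obtain ⟨h, hht, hfh⟩ := Set.mem_iUnion₂.1 (ht (Set.mem_univ f))
  have hlen : ∀ w ∈ I h, w.length < (t.sup fun f => (I f).sup List.length) + 1 := by
    intro w hw
    have : w.length ≤ (I h).sup List.length := Finset.le_sup hw
    have h2 : (I h).sup List.length ≤ t.sup fun f => (I f).sup List.length :=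
      Finset.le_sup (f := fun f => (I f).sup List.length) hht
    omega
  have hgh : ∀ w ∈ I h, g w = h w := fun w hw => by
    rw [← hfg w (hlen w hw)]; exact hfh w hw
  rw [hI h f hfh, hI h g hgh]

/-- Curtis–Hedlund–Lyndon: `τ` is a CA iff it is continuous and
commutes with the shift action. -/
theorem curtis_hedlund_lyndon [Finite Sig] [Finite A] [Nonempty A]
    [TopologicalSpace A] [DiscreteTopology A] (τ : Config Sig A → Config Sig A) :
    IsCA τ ↔
      Continuous τ ∧ ∀ (f : Config Sig A) (v : List Sig), shift (τ f) v = τ (shift f v) := by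
  constructor
  · rintro ⟨r, hr, μ, hμ⟩
    constructor
    · haveI : Finite (Delta Sig (r + 1)) :=
        (List.finite_length_lt Sig (r + 1)).to_subtype
      apply continuous_pi
      intro v
      have h1 : Continuous fun f : Config Sig A => restrict (shift f v) (r + 1) := by
        apply continuous_pi
        intro w
        exact continuous_apply (v ++ w.val)
      have h2 : Continuous μ := continuous_of_discreteTopology
      have : (fun f : Config Sig A => τ f v)
          = fun f => μ (restrict (shift f v) (r + 1)) := by
        funext f; exact hμ f v
      rw [this]
      exact h2.comp h1
    · intro f v
      funext w
      show τ f (v ++ w) = τ (shift f v) w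
      rw [hμ f (v ++ w), hμ (shift f v) w]
      congr 1
      funext u
      show f ((v ++ w) ++ u.val) = f (v ++ (w ++ u.val))
      rw [List.append_assoc]
  · rintro ⟨hcont, hcomm⟩
    have hF : Continuous fun f : Config Sig A => τ f [] :=
      (continuous_apply ([] : List Sig)).comp hcont
    obtain ⟨n, hn1, hn⟩ := uniform_radius _ hF
    refine ⟨n, hn1, fun p => τ (fun w => if h : w.length < n + 1 then p ⟨w, h⟩
      else Classical.arbitrary A) [], fun f v => ?_⟩
    have h1 : τ f v = τ (shift f v) [] := by
      have := congrFun (hcomm f v) []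
      simpa [shift] using this
    rw [h1]
    apply hn
    intro w hw
    have hw' : w.length < n + 1 := by omega
    simp only [restrict, hw', dif_pos]
end

section
/- If τ is a positively expansive cellular automaton on A^{Σ*} with expansivity constant N, then there exists t ≥ 1 such that for every n ≥ 0 and all configurations f₁, f₂: if τ^i(f₁)|_{Δ_{N+n}} = τ^i(f₂)|_{Δ_{N+n}} for all 0 ≤ i ≤ t, then f₁|_{Δ_{N+n+1}} = f₂|_{Δ_{N+n+1}}. -/
open Function

variable {Sig A : Type*}

/-!
Compactness of `A^{Σ*}` makes positive expansiveness uniform: for every `m` there is a time `t`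
such that two configurations whose traces on `Δ_N` agree up to time `t` already agree on `Δ_m`
(otherwise a limit pair of counterexamples would be two distinct configurations with identical
traces on `Δ_N`). Take `m = N + 1`. If the traces of `f₁, f₂` on `Δ_{N+n}` agree, then for every
word `v` of length at most `n` the traces of the shifted configurations `f₁ ∘ (v ++ ·)` and
`f₂ ∘ (v ++ ·)` on `Δ_N` agree, since a cellular automaton commutes with shifts; hence they agree
on `Δ_{N+1}`, and every word of `Δ_{N+n+1}` is of the form `v ++ w` with `|v| ≤ n`, `|w| ≤ N`.
-/

open Filter

theorem restrict_eq_iff {f f' : Config Sig A} {m : ℕ} :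
    restrict f m = restrict f' m ↔ ∀ x : List Sig, x.length < m → f x = f' x :=
  ⟨fun h x hx => congrFun h ⟨x, hx⟩, fun h => funext fun x => h x.1 x.2⟩

theorem restrict_shift_eq {f f' : Config Sig A} {v : List Sig} {k m : ℕ}
    (hvk : v.length + m ≤ k) (h : restrict f k = restrict f' k) :
    restrict (shift f v) m = restrict (shift f' v) m :=
  restrict_eq_iff.2 fun x hx => restrict_eq_iff.1 h (v ++ x) (by simp; omega)

theorem shift_shift (f : Config Sig A) (v w : List Sig) :
    shift (shift f v) w = shift f (v ++ w) := by
  funext x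
  simp [shift, List.append_assoc]

namespace IsCA

variable {τ : Config Sig A → Config Sig A}

theorem map_shift (hτ : IsCA τ) (f : Config Sig A) (v : List Sig) :
    τ (shift f v) = shift (τ f) v := by
  obtain ⟨r, -, μ, hμ⟩ := hτ
  funext x
  show τ (shift f v) x = τ f (v ++ x)
  rw [hμ, hμ, shift_shift]

theorem iterate_map_shift (hτ : IsCA τ) (f : Config Sig A) (v : List Sig) (i : ℕ) :
    τ^[i] (shift f v) = shift (τ^[i] f) v := by
  induction i with
  | zero => rfl
  | succ i ih => rw [iterate_succ_apply', iterate_succ_apply', ih, hτ.map_shift]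

theorem exists_iterate_restrict_eq (hτ : IsCA τ) :
    ∃ r : ℕ, ∀ (s m : ℕ) (f f' : Config Sig A),
      restrict f (m + s * r) = restrict f' (m + s * r) →
        restrict (τ^[s] f) m = restrict (τ^[s] f') m := by
  obtain ⟨r, -, μ, hμ⟩ := hτ
  have step : ∀ (m : ℕ) (f f' : Config Sig A), restrict f (m + r) = restrict f' (m + r) →
      restrict (τ f) m = restrict (τ f') m := fun m f f' h =>
    restrict_eq_iff.2 fun x hx => by
      rw [hμ, hμ, restrict_shift_eq (by omega) h]
  refine ⟨r, fun s => ?_⟩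
  induction s with
  | zero =>
    intro m f f' h
    rwa [zero_mul, add_zero] at h
  | succ s ih =>
    intro m f f' h
    rw [iterate_succ_apply, iterate_succ_apply]
    exact ih m _ _ (step _ f f' (by rwa [Nat.succ_mul, ← add_assoc] at h))

end IsCA

def TracesAgree (τ : Config Sig A → Config Sig A) (t m : ℕ) (f₁ f₂ : Config Sig A) : Prop :=
  ∀ i ≤ t, restrict (τ^[i] f₁) m = restrict (τ^[i] f₂) m

namespace TracesAgree

variable {τ : Config Sig A → Config Sig A} {t m : ℕ} {f₁ f₂ : Config Sig A}

theorem mono {t' : ℕ} (ht : t' ≤ t) (h : TracesAgree τ t m f₁ f₂) :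
    TracesAgree τ t' m f₁ f₂ :=
  fun i hi => h i (hi.trans ht)

theorem shift (hτ : IsCA τ) {k : ℕ} (h : TracesAgree τ t k f₁ f₂) {v : List Sig}
    (hvk : v.length + m ≤ k) : TracesAgree τ t m (shift f₁ v) (shift f₂ v) := fun i hi => by
  rw [hτ.iterate_map_shift, hτ.iterate_map_shift]
  exact restrict_shift_eq hvk (h i hi)

end TracesAgree

theorem Ultrafilter.exists_eventually_restrict_eq [Finite Sig] [Finite A] {ι : Type*}
    (U : Ultrafilter ι) (g : ι → Config Sig A) :
    ∃ G : Config Sig A, ∀ m : ℕ, ∀ᶠ i in U, restrict (g i) m = restrict G m := by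
  choose G hG using fun x : List Sig =>
    U.eventually_exists_iff (P := fun a i => g i x = a).1
      (Eventually.of_forall fun i => ⟨g i x, rfl⟩)
  refine ⟨G, fun m => ?_⟩
  have : Finite (Delta Sig m) := (List.finite_length_lt Sig m).to_subtype
  filter_upwards [eventually_all.2 fun x : Delta Sig m => hG x.1] with i hi
  exact funext hi

theorem PosExpansive.exists_tracesAgree_imp_restrict_eq [Finite Sig] [Finite A]
    {τ : Config Sig A → Config Sig A} {N : ℕ} (hτ : IsCA τ) (hexp : PosExpansive τ N) (m : ℕ) :
    ∃ t : ℕ, ∀ f₁ f₂ : Config Sig A, TracesAgree τ t N f₁ f₂ →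
      restrict f₁ m = restrict f₂ m := by
  by_contra! h
  choose g₁ g₂ hagree hne using h
  let U : Ultrafilter ℕ := Ultrafilter.of atTop
  obtain ⟨G₁, hG₁⟩ := U.exists_eventually_restrict_eq g₁
  obtain ⟨G₂, hG₂⟩ := U.exists_eventually_restrict_eq g₂
  have hG : G₁ ≠ G₂ := by
    rintro rfl
    obtain ⟨t, h₁, h₂⟩ := ((hG₁ m).and (hG₂ m)).exists
    exact hne t (h₁.trans h₂.symm)
  obtain ⟨s, hs⟩ := hexp.2 G₁ G₂ hG
  obtain ⟨r, hloc⟩ := hτ.exists_iterate_restrict_eq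
  have hlate : ∀ᶠ t in U, s ≤ t := (eventually_ge_atTop s).filter_mono (Ultrafilter.of_le _)
  obtain ⟨t, h₁, h₂, hst⟩ := ((hG₁ (N + s * r)).and ((hG₂ _).and hlate)).exists
  exact hs (by rw [← hloc s N _ _ h₁, ← hloc s N _ _ h₂]; exact hagree t s hst)

theorem expansive_exists_t_general [Finite Sig] [Finite A]
    (τ : Config Sig A → Config Sig A) (hτ : IsCA τ) (N : ℕ)
    (hexp : PosExpansive τ N) :
    ∃ t : ℕ, 1 ≤ t ∧ ∀ (n : ℕ) (f₁ f₂ : Config Sig A),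
      (∀ i ≤ t, restrict (τ^[i] f₁) (N + n) = restrict (τ^[i] f₂) (N + n)) →
      restrict f₁ (N + n + 1) = restrict f₂ (N + n + 1) := by
  obtain ⟨t, ht⟩ := hexp.exists_tracesAgree_imp_restrict_eq hτ (N + 1)
  refine ⟨t + 1, by omega, fun n f₁ f₂ hagree => restrict_eq_iff.2 fun u hu => ?_⟩
  have hshift := ht _ _ ((TracesAgree.mono t.le_succ hagree).shift hτ
    (v := u.take n) (m := N) (by simp; omega))
  rw [← List.take_append_drop n u]
  exact restrict_eq_iff.1 hshift (u.drop n) (by simp; omega)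

/-- existence of `t` (one-step determination) for expansive CA. -/
theorem expansive_exists_t [Finite Sig] [Finite A] [Nonempty A]
    (τ : Config Sig A → Config Sig A) (hτ : IsCA τ) (N : ℕ)
    (hexp : PosExpansive τ N) :
    ∃ t : ℕ, 1 ≤ t ∧ ∀ (n : ℕ) (f₁ f₂ : Config Sig A),
      (∀ i ≤ t, restrict (τ^[i] f₁) (N + n) = restrict (τ^[i] f₂) (N + n)) →
      restrict f₁ (N + n + 1) = restrict f₂ (N + n + 1) :=
  expansive_exists_t_general τ hτ N hexp
end

section
/- If τ is a positively expansive cellular automaton on A^{Σ*} with expansivity constant N, and t ≥ 1 satisfies the one-step determination property of Lemma (existence of t), then for every n ≥ 1 and all f₁, f₂: τ^i(f₁)|_{Δ_N} = τ^i(f₂)|_{Δ_N} for all 0 ≤ i ≤ nt implies f₁|_{Δ_{N+n}} = f₂|_{Δ_{N+n}}. -/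
open Function

variable {Sig A : Type*}

/-- iterated determination: agreement on `Δ_N` for `0 ≤ i ≤ nt` determines
the configurations on `Δ_{N+n}`. -/
theorem expansive_nt [Finite Sig] [Finite A] [Nonempty A]
    (τ : Config Sig A → Config Sig A) (hτ : IsCA τ) (N : ℕ)
    (hexp : PosExpansive τ N) (t : ℕ) (ht : 1 ≤ t)
    (hdet : ∀ (n : ℕ) (f₁ f₂ : Config Sig A),
      (∀ i ≤ t, restrict (τ^[i] f₁) (N + n) = restrict (τ^[i] f₂) (N + n)) →
      restrict f₁ (N + n + 1) = restrict f₂ (N + n + 1)) :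
    ∀ n : ℕ, 1 ≤ n → ∀ f₁ f₂ : Config Sig A,
      (∀ i ≤ n * t, restrict (τ^[i] f₁) N = restrict (τ^[i] f₂) N) →
      restrict f₁ (N + n) = restrict f₂ (N + n) := by
  intro n
  induction n with
  | zero => intro h; omega
  | succ n ih =>
    intro _ f₁ f₂ hagree
    rcases Nat.eq_zero_or_pos n with hn | hn
    · subst hn
      have := hdet 0 f₁ f₂ (fun i hi => by
        have : i ≤ 1 * t := by omega
        simpa using hagree i this)
      simpa using this
    · have := hdet n f₁ f₂ (fun i hi => by
        apply ih hn (τ^[i] f₁) (τ^[i] f₂)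
        intro j hj
        have h1 : τ^[j] (τ^[i] f₁) = τ^[j + i] f₁ := (Function.iterate_add_apply τ j i f₁).symm
        have h2 : τ^[j] (τ^[i] f₂) = τ^[j + i] f₂ := (Function.iterate_add_apply τ j i f₂).symm
        rw [h1, h2]
        apply hagree
        have : (n + 1) * t = n * t + t := by ring
        omega)
      exact this
end

section
/- If τ is a positively expansive CA on A^{Σ*} with constant N and t as in the determination lemma, then for every n ≥ 1, |A|^{|Δ_{N+n}|} ≤ |P(τ, N, nt+1)|, where P(τ, n, t) = {(f|_{Δ_n}, τ(f)|_{Δ_n}, …, τ^{t−1}(f)|_{Δ_n}) : f ∈ A^{Σ*}}. -/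
open Function

variable {Sig A : Type*}

instance deltaFinite (Sig : Type*) [Finite Sig] (n : ℕ) :
    Finite (Delta Sig n) :=
  (List.finite_length_lt (α := Sig) n).to_subtype

/-- `|A|^{|Δ_{N+n}|} ≤ |P(τ, N, nt + 1)|` for expansive CA. -/
theorem expansive_card_bound [Finite Sig] [Finite A] [Nonempty A]
    (τ : Config Sig A → Config Sig A) (hτ : IsCA τ) (N : ℕ)
    (hexp : PosExpansive τ N) (t : ℕ) (ht : 1 ≤ t)
    (hdet : ∀ (n : ℕ) (f₁ f₂ : Config Sig A),
      (∀ i ≤ t, restrict (τ^[i] f₁) (N + n) = restrict (τ^[i] f₂) (N + n)) →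
      restrict f₁ (N + n + 1) = restrict f₂ (N + n + 1)) :
    ∀ n : ℕ, 1 ≤ n →
      Nat.card A ^ Nat.card (Delta Sig (N + n)) ≤ Nat.card (Pset τ N (n * t + 1)) := by
  intro n hn
  classical
  set m := N + n with hm
  let ext : (Delta Sig m → A) → Config Sig A := fun p w =>
    if h : w.length < m then p ⟨w, h⟩ else Classical.arbitrary A
  have hext : ∀ p, restrict (ext p) m = p := by
    intro p; funext w; simp only [restrict, ext, dif_pos w.2]; exact congrArg p (Subtype.coe_eta w w.2)
  have key : ∀ k : ℕ, k ≤ n → ∀ f g : Config Sig A,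
      (∀ i ≤ n * t, restrict (τ^[i] f) N = restrict (τ^[i] g) N) →
      ∀ j : ℕ, j + k * t ≤ n * t → restrict (τ^[j] f) (N + k) = restrict (τ^[j] g) (N + k) := by
    intro k
    induction k with
    | zero =>
      intro _ f g h j hj
      simpa using h j (by omega)
    | succ k ih =>
      intro hk f g h j hj
      apply hdet k (τ^[j] f) (τ^[j] g)
      intro i hi
      rw [← Function.iterate_add_apply, ← Function.iterate_add_apply]
      exact ih (by omega) f g h (i + j) (by nlinarith)
  let Φ : (Delta Sig m → A) → ↥(Pset τ N (n * t + 1)) := fun p =>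
    ⟨fun i => restrict (τ^[(i : ℕ)] (ext p)) N, ⟨ext p, fun i => rfl⟩⟩
  have hΦ : Function.Injective Φ := by
    intro p q hpq
    have h1 : ∀ i ≤ n * t, restrict (τ^[i] (ext p)) N = restrict (τ^[i] (ext q)) N := by
      intro i hi
      have := congrFun (congrArg Subtype.val hpq) ⟨i, by omega⟩
      simpa using this
    have h2 := key n le_rfl (ext p) (ext q) h1 0 (by omega)
    simp only [Function.iterate_zero_apply] at h2
    rw [← hext p, ← hext q]
    exact h2
  calc Nat.card A ^ Nat.card (Delta Sig m) = Nat.card (Delta Sig m → A) := by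
        rw [Nat.card_fun]
    _ ≤ Nat.card (Pset τ N (n * t + 1)) := Nat.card_le_card_of_injective Φ hΦ
end

section
/- Every permutive cellular automaton on A^{Σ*} is surjective. -/
open Function

variable {Sig A : Type*}

/-- Auxiliary configuration: defined by downward recursion on `n - |v|`, inverting the
root permutation so that the image under `caMap r μ` agrees with `g` on `Δ_n`. -/
noncomputable def buildF [Nonempty A] (r n : ℕ) (μ : (Delta Sig (r + 1) → A) → A)
    (hperm : Permutive r μ) (g : Config Sig A) : List Sig → A := fun v =>
  if h : n ≤ v.length then Classical.arbitrary A
  else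
    (Equiv.ofBijective _
      (hperm (fun w : {w : List Sig // w.length < r + 1 ∧ w ≠ []} =>
        buildF r n μ hperm g (v ++ w.val)))).symm (g v)
termination_by v => n - v.length
decreasing_by
  all_goals
  have hw : w.val ≠ [] := w.2.2
  have h1 : 1 ≤ w.val.length := List.length_pos_iff.mpr hw
  simp only [List.length_append]
  omega

lemma buildF_spec [Nonempty A] (r n : ℕ) (μ : (Delta Sig (r + 1) → A) → A)
    (hperm : Permutive r μ) (g : Config Sig A) (v : List Sig) (hv : v.length < n) :
    caMap r μ (buildF r n μ hperm g) v = g v := by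
  set f : Config Sig A := buildF r n μ hperm g with hf
  set p : {w : List Sig // w.length < r + 1 ∧ w ≠ []} → A :=
    fun w => f (v ++ w.val) with hp
  have hpat : restrict (shift f v) (r + 1) = rootIns r (f v) p := by
    funext w
    simp only [restrict, shift, rootIns]
    split
    · next h =>
      have hw : w.val = [] := List.length_eq_zero_iff.mp h
      simp [hw]
    · rfl
  have hfv : f v = (Equiv.ofBijective _ (hperm p)).symm (g v) := by
    rw [hf, buildF, dif_neg (by omega : ¬ n ≤ v.length)]
  have : caMap r μ f v = μ (rootIns r (f v) p) := by
    simp only [caMap, hpat]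
  rw [this, hfv]
  exact (Equiv.ofBijective _ (hperm p)).apply_symm_apply (g v)

/-- permutive CA are surjective. -/
theorem permutive_surjective [Finite Sig] [Finite A] [Nonempty A]
    (r : ℕ) (hr : 1 ≤ r) (μ : (Delta Sig (r + 1) → A) → A)
    (hperm : Permutive r μ) :
    Function.Surjective (caMap r μ) := by
  intro g
  classical
  letI : TopologicalSpace A := ⊥
  haveI : DiscreteTopology A := ⟨rfl⟩
  haveI : CompactSpace A := Finite.compactSpace
  haveI : Finite (Delta Sig (r + 1)) := (List.finite_length_lt Sig (r + 1)).to_subtype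
  set C : ℕ → Set (Config Sig A) :=
    fun n => {f | ∀ v : List Sig, v.length < n → caMap r μ f v = g v} with hC
  have hsub : ∀ n, C (n + 1) ⊆ C n := fun n f hf v hv => hf v (by omega)
  have hne : ∀ n, (C n).Nonempty :=
    fun n => ⟨buildF r n μ hperm g, fun v hv => buildF_spec r n μ hperm g v hv⟩
  have hcont : ∀ v : List Sig, Continuous (fun f : Config Sig A => caMap r μ f v) := by
    intro v
    have h1 : Continuous (fun f : Config Sig A => restrict (shift f v) (r + 1)) :=
      continuous_pi fun w => continuous_apply (v ++ w.val)
    exact (continuous_of_discreteTopology (f := μ)).comp h1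
  have hclosed : ∀ n, IsClosed (C n) := by
    intro n
    have heq : C n = ⋂ v ∈ {v : List Sig | v.length < n},
        (fun f : Config Sig A => caMap r μ f v) ⁻¹' {g v} := by
      ext f
      simp [hC, Set.mem_iInter]
    rw [heq]
    exact isClosed_biInter fun v _ => isClosed_singleton.preimage (hcont v)
  obtain ⟨f, hf⟩ :=
    IsCompact.nonempty_iInter_of_sequence_nonempty_isCompact_isClosed C hsub hne
      ((hclosed 0).isCompact) hclosed
  refine ⟨f, funext fun v => ?_⟩
  exact Set.mem_iInter.mp hf (v.length + 1) v (by omega)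
end

section
/- Every permutive cellular automaton on A^{Σ*} is preinjective, i.e., it has no diamonds: there is no pair of distinct blocks p₁ ≠ p₂ with the same support Δ_n (n > 2r+2), coinciding with a fixed block p ∈ A^{Δ_r} on Δ_r and on vΔ_r for each word v of length n−r, and having the same image under the local map μ. -/
open Function

variable {Sig A : Type*}

/-!
Permutivity lets one recover the root value of a block of `Δ_{r+1}` from its `μ`-image and
its values off the root. So if two blocks of size `m + r` have the same image and agree on
all words of length `≥ m`, they agree, by descending induction on word length, on every word
`u` with `|u| < m`: the window `uΔ_{r+1}` of `u` is seen by the image at `u`, and off its root it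
only contains longer words. The two halves of a diamond agree on all words of length `≥ m`
since they both coincide with `p` on every `vΔ_r`, `|v| = m`.
-/

theorem rootIns_self {r : ℕ} (q : Delta Sig (r + 1) → A) :
    rootIns r (q ⟨[], by simp⟩) (fun w => q ⟨w.1, w.2.1⟩) = q := by
  funext w
  unfold rootIns
  split
  · next h => exact congrArg q (Subtype.ext (List.length_eq_zero_iff.mp h).symm)
  · rfl

namespace Permutive

variable {r : ℕ} {μ : (Delta Sig (r + 1) → A) → A}

theorem eq_of_map_eq_of_eq_off_root (hμ : Permutive r μ) {q₁ q₂ : Delta Sig (r + 1) → A}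
    (hoff : ∀ w : Delta Sig (r + 1), w.val ≠ [] → q₁ w = q₂ w) (h : μ q₁ = μ q₂) :
    q₁ = q₂ := by
  have hrest : (fun w => q₁ ⟨w.1, w.2.1⟩ : {w : List Sig // w.length < r + 1 ∧ w ≠ []} → A) =
      fun w => q₂ ⟨w.1, w.2.1⟩ := funext fun w => hoff _ w.2.2
  rw [← rootIns_self q₁, ← rootIns_self q₂] at h ⊢
  rw [hrest] at h ⊢
  rw [(hμ _).injective h]

theorem eq_of_blockImage_eq (hμ : Permutive r μ) {m : ℕ} {p₁ p₂ : Delta Sig (m + r) → A}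
    (hbd : ∀ u : Delta Sig (m + r), m ≤ u.val.length → p₁ u = p₂ u)
    (h : blockImage r m μ p₁ = blockImage r m μ p₂) : p₁ = p₂ := by
  suffices key : ∀ k, ∀ u : Delta Sig (m + r), m ≤ u.val.length + k → p₁ u = p₂ u from
    funext fun u => key m u (by omega)
  intro k
  induction k with
  | zero => exact hbd
  | succ k ih =>
    intro u hu
    by_cases hlong : m ≤ u.val.length + k
    · exact ih u hlong
    have hu_lt : u.val.length < m := by omega
    have hwin := hμ.eq_of_map_eq_of_eq_off_root
      (fun w hw => ih _ (by
        show m ≤ (u.val ++ w.val).length + k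
        rw [List.length_append]; have := List.length_pos_iff.mpr hw; omega))
      (congrFun h ⟨u.val, hu_lt⟩)
    have hroot := congrFun hwin ⟨[], by simp⟩
    simp only [List.append_nil] at hroot
    exact hroot

end Permutive

theorem permutive_preinjective_general
    (r : ℕ) (μ : (Delta Sig (r + 1) → A) → A)
    (hperm : Permutive r μ) :
    ¬ HasDiamond r μ := by
  rintro ⟨m, -, p, p₁, p₂, hne, -, hbound, himg⟩
  refine hne (hperm.eq_of_blockImage_eq (fun u hu => ?_) himg)
  obtain ⟨u, hu_lt⟩ := u
  dsimp only at hu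
  obtain ⟨h₁, h₂⟩ := hbound (u.take m) (by simp; omega) ⟨u.drop m, by simp; omega⟩
  simp only [List.take_append_drop] at h₁ h₂
  exact h₁.trans h₂.symm

/-- permutive CA are preinjective (they have no diamonds). -/
theorem permutive_preinjective [Finite Sig] [Finite A] [Nonempty A]
    (r : ℕ) (hr : 1 ≤ r) (μ : (Delta Sig (r + 1) → A) → A)
    (hperm : Permutive r μ) :
    ¬ HasDiamond r μ :=
  permutive_preinjective_general r μ hperm
end

section
/- The cellular automaton on {0,1}^{Σ*} with Σ = {0,1} and radius 1 defined by μ(p) = p(0) + p(1) mod 2 is surjective but not preinjective. -/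
open Function

variable {Sig A : Type*}

/-- The local map `μ(p) = p(0) + p(1) mod 2` of radius `1` on the binary tree. -/
def xorMu : (Delta (Fin 2) (1 + 1) → Fin 2) → Fin 2 :=
  fun p => p ⟨[0], by simp⟩ + p ⟨[1], by simp⟩

/-- A preimage for the xor CA: put `0` on left children and `g v` on right children. -/
def xorPre (g : Config (Fin 2) (Fin 2)) : Config (Fin 2) (Fin 2) :=
  fun w => match w.reverse with
    | [] => 0
    | a :: t => if a = 0 then 0 else g t.reverse

lemma xorPre_zero (g : Config (Fin 2) (Fin 2)) (v : List (Fin 2)) :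
    xorPre g (v ++ [0]) = 0 := by
  simp [xorPre, List.reverse_append]

lemma xorPre_one (g : Config (Fin 2) (Fin 2)) (v : List (Fin 2)) :
    xorPre g (v ++ [1]) = g v := by
  simp [xorPre, List.reverse_append]

/-- the CA defined by `μ(p) = p(0) + p(1) mod 2` is surjective but
not preinjective. -/
theorem xor_surjective_not_preinjective :
    Function.Surjective (caMap 1 xorMu) ∧ HasDiamond 1 xorMu := by
  constructor
  · intro g
    refine ⟨xorPre g, ?_⟩
    funext v
    show xorMu (restrict (shift (xorPre g) v) 2) = g v
    simp [xorMu, restrict, shift, xorPre_zero, xorPre_one]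
  · refine ⟨4, by omega, fun _ => 0, fun _ => 0,
      fun w => if w.val.length = 0 ∨ w.val.length = 4 then 0 else 1, ?_, ?_, ?_, ?_⟩
    · intro h
      have h1 := congrFun h ⟨[0], by simp⟩
      simp at h1
    · intro w
      have h0 : w.val.length = 0 := by have := w.2; omega
      simp [h0]
    · intro v hv w
      have h0 : w.val.length = 0 := by have := w.2; omega
      constructor
      · rfl
      · simp [List.length_append, hv, h0]
    · funext v
      show xorMu _ = xorMu _
      simp only [xorMu]
      by_cases h : v.val.length = 3
      · simp [List.length_append, h]
      · have hc : ¬ (v.val.length + 1 = 0 ∨ v.val.length + 1 = 4) := by omega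
        simp only [List.length_append, List.length_cons, List.length_nil,
          Nat.zero_add, hc, if_neg]
        decide
end

section
/- Let τ be a CA of radius r ≥ 1 on A^{Σ*}. If for every n ≥ 1 and every block q ∈ A^{Δ_n}, the set μ^{-1}(q) of blocks in A^{Δ_{n+r}} mapping to q under the induced local map has cardinality exactly |A|^{|Δ_{n+r}| − |Δ_n|}, then τ is surjective. -/
open Function

variable {Sig A : Type*}

/-!
Since `|A|^k > 0`, every block `q ∈ A^{Δ_n}` has a preimage under `μ`, so every finite
pattern of a configuration occurs in the image of `τ`, i.e. `τ` has dense range. As `τ` is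
continuous on the compact space `A^{Σ*}`, its range is also closed, hence everything.
-/

open Filter

instance Delta.finite [Finite Sig] (n : ℕ) : Finite (Delta Sig n) :=
  (List.finite_length_lt Sig n).to_subtype

theorem restrict_surjective [Nonempty A] (n : ℕ) :
    Surjective fun f : Config Sig A => restrict f n := fun p =>
  ⟨fun w => if hw : w.length < n then p ⟨w, hw⟩ else Classical.arbitrary A,
    funext fun w => dif_pos w.2⟩

theorem continuous_caMap [TopologicalSpace A] [DiscreteTopology A] [Finite Sig] (r : ℕ)
    (μ : (Delta Sig (r + 1) → A) → A) :
    Continuous (caMap r μ) :=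
  continuous_pi fun v => continuous_of_discreteTopology.comp <|
    continuous_pi fun w : Delta Sig (r + 1) => continuous_apply (v ++ w.val)

theorem denseRange_of_eventually_surjective_restrict [TopologicalSpace A] {X : Type*}
    {F : X → Config Sig A}
    (h : ∀ᶠ n in atTop, Surjective fun x => restrict (F x) n) : DenseRange F := by
  refine dense_iff_inter_open.2 fun U hU ⟨g, hg⟩ => ?_
  obtain ⟨I, u, hu, hIU⟩ := isOpen_pi_iff.1 hU g hg
  obtain ⟨n, hIn, hn⟩ := ((eventually_gt_atTop (I.sup List.length)).and h).exists
  obtain ⟨x, hx⟩ := hn (restrict g n)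
  refine ⟨F x, hIU fun w hw => ?_, x, rfl⟩
  have hwn : w.length < n := (Finset.le_sup (f := List.length) hw).trans_lt hIn
  have hFx : F x w = g w := congrFun hx ⟨w, hwn⟩
  exact hFx ▸ (hu w hw).2

theorem surjective_caMap_of_eventually_surjective_blockImage [Finite Sig] [Finite A]
    [Nonempty A] {r : ℕ} {μ : (Delta Sig (r + 1) → A) → A}
    (h : ∀ᶠ n in atTop, Surjective (blockImage r n μ)) : Surjective (caMap r μ) := by
  let _ : TopologicalSpace A := ⊥
  have : DiscreteTopology A := ⟨rfl⟩
  have hdense : DenseRange (caMap r μ) :=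
    denseRange_of_eventually_surjective_restrict <|
      h.mono fun n hn => hn.comp (restrict_surjective (n + r))
  have hclosed : IsClosed (Set.range (caMap r μ)) :=
    (isCompact_range (continuous_caMap r μ)).isClosed
  rw [← Set.range_eq_univ, ← hdense.closure_range, hclosed.closure_eq]

theorem card_eq_imp_surjective_general [Finite Sig] [Finite A]
    (r : ℕ) (μ : (Delta Sig (r + 1) → A) → A)
    (h : ∀ n : ℕ, 1 ≤ n → ∀ q : Delta Sig n → A,
      Nat.card {p : Delta Sig (n + r) → A // blockImage r n μ p = q} =
        Nat.card A ^ (Nat.card (Delta Sig (n + r)) - Nat.card (Delta Sig n))) :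
    Function.Surjective (caMap r μ) := by
  intro g
  have : Nonempty A := ⟨g []⟩
  refine surjective_caMap_of_eventually_surjective_blockImage
    (eventually_atTop.2 ⟨1, fun n hn q => ?_⟩) g
  have hpos : 0 < Nat.card {p : Delta Sig (n + r) → A // blockImage r n μ p = q} :=
    h n hn q ▸ pow_pos Nat.card_pos _
  obtain ⟨⟨p, hp⟩⟩ := (Nat.card_pos_iff.1 hpos).1
  exact ⟨p, hp⟩

/-- if every block `q ∈ A^{Δ_n}` has exactly
`|A|^{|Δ_{n+r}| - |Δ_n|}` preimages under the induced local map, then `τ` is surjective. -/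
theorem card_eq_imp_surjective [Finite Sig] [Finite A] [Nonempty A]
    (r : ℕ) (hr : 1 ≤ r) (μ : (Delta Sig (r + 1) → A) → A)
    (h : ∀ n : ℕ, 1 ≤ n → ∀ q : Delta Sig n → A,
      Nat.card {p : Delta Sig (n + r) → A // blockImage r n μ p = q} =
        Nat.card A ^ (Nat.card (Delta Sig (n + r)) - Nat.card (Delta Sig n))) :
    Function.Surjective (caMap r μ) :=
  card_eq_imp_surjective_general r μ h
end

section
/- Let τ be a CA of radius r ≥ 1 on A^{Σ*}. If τ is not surjective, then there exist n ≥ 1 and a block q ∈ A^{Δ_n} such that |μ^{-1}(q)| > |A|^{|Δ_{n+r}| − |Δ_n|}. -/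
open Function

variable {Sig A : Type*}

instance instFiniteListLt [Finite Sig] (n : ℕ) : Finite {w : List Sig // w.length < n} :=
  (List.finite_length_lt Sig n).to_subtype

instance instFiniteDelta [Finite Sig] (n : ℕ) : Finite (Delta Sig n) :=
  instFiniteListLt n

lemma nat_card_sigma {ι : Type*} [Fintype ι] (β : ι → Type*) [∀ i, Finite (β i)] :
    Nat.card (Σ i, β i) = ∑ i, Nat.card (β i) := by
  haveI : ∀ i, Fintype (β i) := fun i => Fintype.ofFinite _
  simp [Nat.card_eq_fintype_card, Fintype.card_sigma]

/-- Compactness: if every restriction of `g` has a preimage block, `g` is in the image. -/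
lemma exists_preimage [Finite Sig] [Finite A] [Nonempty A]
    (r : ℕ) (μ : (Delta Sig (r + 1) → A) → A) (g : Config Sig A)
    (H : ∀ n : ℕ, ∃ p : Delta Sig (n + r) → A, blockImage r n μ p = restrict g n) :
    ∃ f : Config Sig A, caMap r μ f = g := by
  classical
  choose p hp using H
  set U : Ultrafilter ℕ := Filter.hyperfilter ℕ with hU
  set P : ℕ → List Sig → A := fun n w =>
    if h : w.length < n + r then p n ⟨w, h⟩ else Classical.arbitrary A with hP
  have key : ∀ w : List Sig, ∃ a : A, {n | P n w = a} ∈ U := by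
    intro w
    by_contra hc
    push_neg at hc
    have hcompl : ∀ a : A, {n | P n w = a}ᶜ ∈ U := fun a =>
      (Ultrafilter.compl_mem_iff_notMem).2 (hc a)
    have hint : (⋂ a : A, {n | P n w = a}ᶜ) ∈ (U : Filter ℕ) :=
      (Filter.iInter_mem).2 hcompl
    have : (⋂ a : A, {n | P n w = a}ᶜ) = ∅ := by
      ext n
      simp only [Set.mem_iInter, Set.mem_compl_iff, Set.mem_setOf_eq, Set.mem_empty_iff_false,
        iff_false, not_forall, not_not]
      exact ⟨P n w, rfl⟩
    rw [this] at hint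
    exact Filter.empty_notMem (U : Filter ℕ) hint
  choose f hf using key
  refine ⟨f, ?_⟩
  funext v
  have hbig : {n | v.length < n} ∈ U := by
    have : {n : ℕ | ¬ v.length < n}.Finite := by
      apply Set.Finite.subset (Set.finite_Iic v.length)
      intro n hn
      simp only [Set.mem_setOf_eq, not_lt] at hn
      exact hn
    have h2 := Filter.compl_mem_hyperfilter_of_finite this
    have h3 : {n : ℕ | ¬ v.length < n}ᶜ = {n | v.length < n} := by
      ext m; simp
    rw [h3] at h2
    exact h2
  have hall : (⋂ w : Delta Sig (r + 1), {n | P n (v ++ w.val) = f (v ++ w.val)}) ∈ (U : Filter ℕ) :=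
    (Filter.iInter_mem).2 fun w => hf (v ++ w.val)
  obtain ⟨n, hn1, hn2⟩ := Filter.nonempty_of_mem (f := (U : Filter ℕ)) (Filter.inter_mem hall hbig)
  simp only [Set.mem_iInter, Set.mem_setOf_eq] at hn1 hn2
  have hvn : v.length < n := hn2
  have heq : (restrict (shift f v) (r + 1)) =
      (fun w : Delta Sig (r + 1) => p n ⟨v ++ w.val, by
        have := w.2; simp only [List.length_append]; omega⟩) := by
    funext w
    have h1 := hn1 w
    have h2 : P n (v ++ w.val) = p n ⟨v ++ w.val, by
        have := w.2; simp only [List.length_append]; omega⟩ := by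
      rw [hP]
      simp only []
      rw [dif_pos]
    show f (v ++ w.val) = _
    rw [← h1, h2]
  show μ (restrict (shift f v) (r + 1)) = g v
  rw [heq]
  have := congrFun (hp n) ⟨v, hvn⟩
  exact this


/-- if `τ` is not surjective, then some block has strictly more than
`|A|^{|Δ_{n+r}| - |Δ_n|}` preimages under the induced local map. -/
theorem not_surjective_imp_card_gt [Finite Sig] [Finite A] [Nonempty A]
    (r : ℕ) (hr : 1 ≤ r) (μ : (Delta Sig (r + 1) → A) → A)
    (h : ¬ Function.Surjective (caMap r μ)) :
    ∃ n : ℕ, 1 ≤ n ∧ ∃ q : Delta Sig n → A,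
      Nat.card A ^ (Nat.card (Delta Sig (n + r)) - Nat.card (Delta Sig n)) <
        Nat.card {p : Delta Sig (n + r) → A // blockImage r n μ p = q} := by
  classical
  by_contra hcon
  push_neg at hcon
  apply h
  intro g
  apply exists_preimage r μ g
  intro n
  rcases Nat.eq_zero_or_pos n with hn | hn
  · subst hn
    refine ⟨fun _ => Classical.arbitrary A, ?_⟩
    funext v
    exact absurd v.2 (by omega)
  -- n ≥ 1 : counting argument
  by_contra hno
  push_neg at hno
  have hq0 : Nat.card {p : Delta Sig (n + r) → A // blockImage r n μ p = restrict g n} = 0 := by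
    rw [Nat.card_eq_zero]
    left
    rw [isEmpty_subtype]
    exact hno
  have hbound := hcon n hn
  set D := Nat.card (Delta Sig (n + r)) - Nat.card (Delta Sig n) with hD
  set K := Nat.card A ^ D with hK
  -- cardinalities
  have hDle : Nat.card (Delta Sig n) ≤ Nat.card (Delta Sig (n + r)) := by
    apply Nat.card_le_card_of_injective (fun w : Delta Sig n =>
      (⟨w.val, by have := w.2; omega⟩ : Delta Sig (n + r)))
    intro a b hab
    simp only [Subtype.mk.injEq] at hab
    exact Subtype.ext hab
  have hApos : 0 < Nat.card A := Nat.card_pos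
  haveI : Fintype (Delta Sig n → A) := Fintype.ofFinite _
  -- total count
  have htotal : ∑ q : Delta Sig n → A,
      Nat.card {p : Delta Sig (n + r) → A // blockImage r n μ p = q} =
      Nat.card A ^ Nat.card (Delta Sig (n + r)) := by
    have e : (Σ q : Delta Sig n → A,
        {p : Delta Sig (n + r) → A // blockImage r n μ p = q}) ≃
        (Delta Sig (n + r) → A) := Equiv.sigmaFiberEquiv (blockImage r n μ)
    have h1 : Nat.card (Σ q : Delta Sig n → A,
        {p : Delta Sig (n + r) → A // blockImage r n μ p = q}) =
        Nat.card (Delta Sig (n + r) → A) := Nat.card_congr e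
    rw [Nat.card_fun] at h1
    rw [← h1, nat_card_sigma]
  -- upper bound
  have hub : ∑ q : Delta Sig n → A,
      Nat.card {p : Delta Sig (n + r) → A // blockImage r n μ p = q} <
      Nat.card (Delta Sig n → A) * K := by
    calc ∑ q : Delta Sig n → A,
        Nat.card {p : Delta Sig (n + r) → A // blockImage r n μ p = q}
        < ∑ _q : Delta Sig n → A, K := by
          apply Finset.sum_lt_sum
          · intro q _; exact hbound q
          · exact ⟨restrict g n, Finset.mem_univ _, by
              rw [hq0]; exact pow_pos hApos D⟩
      _ = Nat.card (Delta Sig n → A) * K := by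
          rw [Finset.sum_const, Finset.card_univ, Nat.card_eq_fintype_card, smul_eq_mul]
  rw [htotal, Nat.card_fun, hK, hD, ← pow_add, Nat.add_sub_cancel' hDle] at hub
  exact lt_irrefl _ hub
end
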